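/- arXiv:math/9908174 — 5 statements merged into one kernel-verified Lean document; each statement's English description precedes it below -/
import Mathlib

section
/- Let n ≥ 2 be even and let D_n be the dihedral group of order 2n, generated by a rotation r of order n and a reflection s. Then ⟨r⟩, ⟨s⟩ and ⟨r·s⟩ are maximal cyclic subgroups of D_n, no two of these three subgroups are conjugate in D_n, and every maximal cyclic subgroup of D_n is conjugate in D_n to exactly one of them. -/
/-- A maximal cyclic subgroup of a group `G`: a cyclic subgroup not properly contained in
any other cyclic subgroup of `G`. -/
def IsMaximalCyclic {G : Type*} [Group G] (C : Subgroup G) : Prop :=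
  IsCyclic C ∧ ∀ C' : Subgroup G, IsCyclic C' → C ≤ C' → C = C'

/-- Two subgroups of `G` are conjugate (in `G`) if one is mapped to the other by conjugation
by some element of `G`. -/
def SubgroupsConj {G : Type*} [Group G] (H₁ H₂ : Subgroup G) : Prop :=
  ∃ g : G, Subgroup.map (MulAut.conj g).toMonoidHom H₁ = H₂

open Subgroup DihedralGroup

lemma zpowers_isCyclic' {G : Type*} [Group G] (g : G) : IsCyclic (Subgroup.zpowers g) := by
  refine ⟨⟨⟨g, Subgroup.mem_zpowers g⟩, ?_⟩⟩
  rintro ⟨x, k, rfl⟩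
  exact ⟨k, by ext; simp⟩

lemma cyclic_eq_zpowers {G : Type*} [Group G] {C : Subgroup G} (h : IsCyclic C) :
    ∃ g : G, C = Subgroup.zpowers g := by
  obtain ⟨⟨g, hg⟩, hgen⟩ := h.exists_generator
  refine ⟨g, le_antisymm ?_ (Subgroup.zpowers_le.mpr hg)⟩
  intro x hx
  obtain ⟨k, hk⟩ := hgen ⟨x, hx⟩
  exact ⟨k, congrArg Subtype.val hk⟩

section
variable {n : ℕ}

lemma mem_zpowers_r_one [NeZero n] (i : ZMod n) :
    DihedralGroup.r i ∈ Subgroup.zpowers (DihedralGroup.r (1 : ZMod n)) := by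
  refine ⟨(i.val : ℤ), ?_⟩
  show DihedralGroup.r 1 ^ (i.val : ℤ) = _
  rw [zpow_natCast, DihedralGroup.r_one_pow, ZMod.natCast_val, ZMod.cast_id]

lemma zpowers_r_rot (i : ZMod n) {x : DihedralGroup n}
    (hx : x ∈ Subgroup.zpowers (DihedralGroup.r i)) : ∃ k, x = DihedralGroup.r k := by
  obtain ⟨k, rfl⟩ := hx
  show ∃ m, DihedralGroup.r i ^ k = DihedralGroup.r m
  induction k using Int.induction_on with
  | zero => exact ⟨0, by rw [zpow_zero, DihedralGroup.one_def]⟩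
  | succ k ih =>
    obtain ⟨m, hm⟩ := ih
    exact ⟨m + i, by rw [zpow_add, zpow_one, hm, DihedralGroup.r_mul_r]⟩
  | pred k ih =>
    obtain ⟨m, hm⟩ := ih
    refine ⟨m - i, ?_⟩
    have : (DihedralGroup.r i)⁻¹ = DihedralGroup.r (-i) := by
      rw [inv_eq_iff_mul_eq_one, DihedralGroup.r_mul_r, add_neg_cancel, DihedralGroup.one_def]
    rw [zpow_sub, zpow_one, hm, this, DihedralGroup.r_mul_r, sub_eq_add_neg]

lemma mem_zpowers_sr (j : ZMod n) {x : DihedralGroup n}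
    (hx : x ∈ Subgroup.zpowers (DihedralGroup.sr j)) :
    x = 1 ∨ x = DihedralGroup.sr j := by
  obtain ⟨k, rfl⟩ := hx
  show DihedralGroup.sr j ^ k = 1 ∨ DihedralGroup.sr j ^ k = DihedralGroup.sr j
  have h2 : (DihedralGroup.sr j) ^ (2:ℤ) = 1 := by
    rw [zpow_two, DihedralGroup.sr_mul_self]
  rcases Int.even_or_odd k with ⟨m, hm⟩ | ⟨m, hm⟩
  · left; rw [hm, ← two_mul, zpow_mul, h2, one_zpow]
  · right; rw [hm, zpow_add, zpow_mul, h2, one_zpow, one_mul, zpow_one]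

lemma sr_inv (j : ZMod n) : (DihedralGroup.sr j)⁻¹ = DihedralGroup.sr j := by
  rw [eq_comm, eq_inv_iff_mul_eq_one, DihedralGroup.sr_mul_self]

lemma r_inv (i : ZMod n) : (DihedralGroup.r i)⁻¹ = DihedralGroup.r (-i) := by
  rw [eq_comm, eq_inv_iff_mul_eq_one, DihedralGroup.r_mul_r, neg_add_cancel, DihedralGroup.one_def]

lemma conj_r_sr (i j : ZMod n) :
    (MulAut.conj (DihedralGroup.r i)) (DihedralGroup.sr j) = DihedralGroup.sr (j - 2 * i) := by
  simp only [MulAut.conj_apply, r_inv, DihedralGroup.r_mul_sr, DihedralGroup.sr_mul_r]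
  ring_nf

lemma conj_sr_sr (a j : ZMod n) :
    (MulAut.conj (DihedralGroup.sr a)) (DihedralGroup.sr j) = DihedralGroup.sr (2 * a - j) := by
  simp only [MulAut.conj_apply, sr_inv, DihedralGroup.sr_mul_sr, DihedralGroup.r_mul_sr]
  ring_nf

lemma conj_rot (g : DihedralGroup n) (i : ZMod n) :
    ∃ k, (MulAut.conj g) (DihedralGroup.r i) = DihedralGroup.r k := by
  cases g with
  | r a => exact ⟨i, by simp [MulAut.conj_apply, r_inv, DihedralGroup.r_mul_r]⟩
  | sr a => exact ⟨-i, by simp [MulAut.conj_apply, sr_inv, DihedralGroup.r_mul_sr,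
      DihedralGroup.sr_mul_sr]⟩

end

section
variable {n : ℕ}

lemma subconj_refl {G : Type*} [Group G] (H : Subgroup G) : SubgroupsConj H H := by
  refine ⟨1, ?_⟩
  ext x
  simp [Subgroup.mem_map]

lemma maxcyc_r (hn : 2 ≤ n) :
    IsMaximalCyclic (Subgroup.zpowers (DihedralGroup.r (1 : ZMod n))) := by
  haveI : NeZero n := ⟨by omega⟩
  haveI : Fact (1 < n) := ⟨by omega⟩
  refine ⟨zpowers_isCyclic' _, fun C' hC' hle => ?_⟩
  obtain ⟨g, rfl⟩ := cyclic_eq_zpowers hC'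
  cases g with
  | r i =>
    refine le_antisymm hle ?_
    intro x hx
    obtain ⟨k, rfl⟩ := zpowers_r_rot i hx
    exact mem_zpowers_r_one k
  | sr a =>
    have h := hle (Subgroup.mem_zpowers _)
    rcases mem_zpowers_sr a h with h1 | h1
    · rw [DihedralGroup.one_def] at h1
      have : (1 : ZMod n) = 0 := by injection h1
      exact absurd this one_ne_zero
    · exact absurd h1 (by simp)

lemma maxcyc_sr (j : ZMod n) :
    IsMaximalCyclic (Subgroup.zpowers (DihedralGroup.sr j)) := by
  refine ⟨zpowers_isCyclic' _, fun C' hC' hle => ?_⟩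
  obtain ⟨g, rfl⟩ := cyclic_eq_zpowers hC'
  have h := hle (Subgroup.mem_zpowers _)
  cases g with
  | r i =>
    obtain ⟨k, hk⟩ := zpowers_r_rot i h
    exact absurd hk (by simp)
  | sr a =>
    rcases mem_zpowers_sr a h with h1 | h1
    · rw [DihedralGroup.one_def] at h1
      exact absurd h1 (by intro h; cases h)
    · have : j = a := by injection h1
      rw [this]

lemma conj_s_form (g : DihedralGroup n) :
    ∃ t, (MulAut.conj g) (DihedralGroup.sr 0) = DihedralGroup.sr (2 * t) := by
  cases g with
  | r i => exact ⟨-i, by rw [conj_r_sr]; congr 1; ring⟩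
  | sr a => exact ⟨a, by rw [conj_sr_sr]; congr 1; ring⟩

end
/-- Let `n ≥ 2` be even and let `D_n` be the dihedral group of order `2n`, generated by the
rotation `r` of order `n` and the reflection `s`.  Then `⟨r⟩`, `⟨s⟩` and `⟨r·s⟩` are maximal
cyclic subgroups of `D_n`, no two of these three subgroups are conjugate in `D_n`, and every
maximal cyclic subgroup of `D_n` is conjugate in `D_n` to (exactly) one of them. -/
theorem dihedral_even_maximal_cyclic_classes (n : ℕ) (hn : 2 ≤ n) (heven : Even n) :
    let r : DihedralGroup n := DihedralGroup.r 1
    let s : DihedralGroup n := DihedralGroup.sr 0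
    IsMaximalCyclic (Subgroup.zpowers r) ∧
    IsMaximalCyclic (Subgroup.zpowers s) ∧
    IsMaximalCyclic (Subgroup.zpowers (r * s)) ∧
    (¬ SubgroupsConj (Subgroup.zpowers r) (Subgroup.zpowers s) ∧
     ¬ SubgroupsConj (Subgroup.zpowers r) (Subgroup.zpowers (r * s)) ∧
     ¬ SubgroupsConj (Subgroup.zpowers s) (Subgroup.zpowers (r * s))) ∧
    (∀ C : Subgroup (DihedralGroup n), IsMaximalCyclic C →
      SubgroupsConj C (Subgroup.zpowers r) ∨
      SubgroupsConj C (Subgroup.zpowers s) ∨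
      SubgroupsConj C (Subgroup.zpowers (r * s))) := by
  intro r s
  haveI : NeZero n := ⟨by omega⟩
  have hrs : r * s = DihedralGroup.sr (-1 : ZMod n) := by
    show DihedralGroup.r 1 * DihedralGroup.sr 0 = _
    rw [DihedralGroup.r_mul_sr, zero_sub]
  obtain ⟨n2, hn2⟩ := heven
  have hdvd : (2 : ℕ) ∣ n := ⟨n2, by omega⟩
  have hodd : ∀ t : ZMod n, (-1 : ZMod n) ≠ 2 * t := by
    intro t h
    have h2 := congrArg (ZMod.castHom hdvd (ZMod 2)) h
    rw [map_neg, map_one, map_mul, map_ofNat] at h2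
    rw [show ((2 : ZMod 2)) = 0 from rfl, zero_mul] at h2
    exact absurd h2 (by decide)
  have hpar : ∀ j : ZMod n, (∃ k : ZMod n, j = 2 * k) ∨ (∃ k : ZMod n, j + 1 = 2 * k) := by
    intro j
    rcases Nat.even_or_odd j.val with ⟨m, hm⟩ | ⟨m, hm⟩
    · left
      refine ⟨(m : ZMod n), ?_⟩
      have : j = ((j.val : ℕ) : ZMod n) := by rw [ZMod.natCast_val, ZMod.cast_id]
      rw [this, hm]
      push_cast
      ring
    · right
      refine ⟨((m + 1 : ℕ) : ZMod n), ?_⟩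
      have : j = ((j.val : ℕ) : ZMod n) := by rw [ZMod.natCast_val, ZMod.cast_id]
      rw [this, hm]
      push_cast
      ring
  -- conjugating ⟨sr j⟩ into ⟨sr m⟩ when j - 2i = m
  have hconj_sr : ∀ (j i : ZMod n),
      Subgroup.map (MulAut.conj (DihedralGroup.r i)).toMonoidHom
        (Subgroup.zpowers (DihedralGroup.sr j)) =
        Subgroup.zpowers (DihedralGroup.sr (j - 2 * i)) := by
    intro j i
    rw [MonoidHom.map_zpowers]
    congr 1
    exact conj_r_sr i j
  refine ⟨maxcyc_r hn, maxcyc_sr 0, hrs ▸ maxcyc_sr (-1), ⟨?_, ?_, ?_⟩, ?_⟩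
  · rintro ⟨g, hg⟩
    have hs : s ∈ Subgroup.map (MulAut.conj g).toMonoidHom (Subgroup.zpowers r) :=
      hg ▸ Subgroup.mem_zpowers _
    obtain ⟨x, hx, hgx⟩ := hs
    obtain ⟨k, rfl⟩ := zpowers_r_rot 1 hx
    obtain ⟨m, hm⟩ := conj_rot g k
    rw [show ((MulAut.conj g).toMonoidHom (DihedralGroup.r k)) =
      (MulAut.conj g) (DihedralGroup.r k) from rfl, hm] at hgx
    exact absurd hgx (by simp [s])
  · rintro ⟨g, hg⟩
    rw [hrs] at hg
    have hs : DihedralGroup.sr (-1 : ZMod n) ∈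
        Subgroup.map (MulAut.conj g).toMonoidHom (Subgroup.zpowers r) :=
      hg ▸ Subgroup.mem_zpowers _
    obtain ⟨x, hx, hgx⟩ := hs
    obtain ⟨k, rfl⟩ := zpowers_r_rot 1 hx
    obtain ⟨m, hm⟩ := conj_rot g k
    rw [show ((MulAut.conj g).toMonoidHom (DihedralGroup.r k)) =
      (MulAut.conj g) (DihedralGroup.r k) from rfl, hm] at hgx
    exact absurd hgx (by simp)
  · rintro ⟨g, hg⟩
    rw [hrs, MonoidHom.map_zpowers] at hg
    obtain ⟨t, ht⟩ := conj_s_form g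
    rw [show ((MulAut.conj g).toMonoidHom (s) : DihedralGroup n) =
      (MulAut.conj g) (DihedralGroup.sr 0) from rfl, ht] at hg
    have hmem : DihedralGroup.sr (-1 : ZMod n) ∈
        Subgroup.zpowers (DihedralGroup.sr (2 * t)) := hg ▸ Subgroup.mem_zpowers _
    rcases mem_zpowers_sr _ hmem with h1 | h1
    · rw [DihedralGroup.one_def] at h1
      exact absurd h1 (by intro h; cases h)
    · have : (-1 : ZMod n) = 2 * t := by injection h1
      exact hodd t this
  · rintro C ⟨hcyc, hmax⟩
    obtain ⟨g, rfl⟩ := cyclic_eq_zpowers hcyc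
    cases g with
    | r i =>
      left
      have hle : Subgroup.zpowers (DihedralGroup.r i) ≤ Subgroup.zpowers r := by
        intro x hx
        obtain ⟨k, rfl⟩ := zpowers_r_rot i hx
        exact mem_zpowers_r_one k
      rw [hmax _ (zpowers_isCyclic' r) hle]
      exact subconj_refl _
    | sr j =>
      right
      rcases hpar j with ⟨k, hk⟩ | ⟨k, hk⟩
      · left
        refine ⟨DihedralGroup.r k, ?_⟩
        rw [hconj_sr j k]
        congr 1
        rw [hk]; ring_nf; rfl
      · right
        rw [hrs]
        refine ⟨DihedralGroup.r k, ?_⟩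
        rw [hconj_sr j k]
        congr 2
        have : (2 : ZMod n) * k = j + 1 := hk.symm
        rw [this]; ring
end

section
/- Let K be an algebraically closed field of characteristic zero, let G be a finite subgroup of PGL(2,K), and let g, h be nontrivial elements of G that have a common fixed point z ∈ P¹(K). Then g and h commute, and g and h have the same set of fixed points in P¹(K). -/
open Matrix

/-- The projective general linear group `PGL(2,K)`: the quotient of `GL(2,K)` by its
center, the subgroup of nonzero scalar matrices. -/
abbrev PGL2 (K : Type*) [Field K] : Type _ :=
  GL (Fin 2) K ⧸ Subgroup.center (GL (Fin 2) K)

/-- The projective line `P¹(K)`, the projectivization of the `K`-vector space `K²`. -/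
abbrev ProjLine (K : Type*) [Field K] : Type _ := Projectivization K (Fin 2 → K)

/-- The (linear) action of a matrix `A ∈ GL(2,K)` on the projective line `P¹(K)`. -/
noncomputable def GL2.onProj {K : Type*} [Field K] (A : GL (Fin 2) K) :
    ProjLine K → ProjLine K :=
  Projectivization.map
    (LinearMap.GeneralLinearGroup.toLinearEquiv (Matrix.GeneralLinearGroup.toLin A)).toLinearMap
    (LinearMap.GeneralLinearGroup.toLinearEquiv (Matrix.GeneralLinearGroup.toLin A)).injective

/-- `PGL2.MapsTo g z w` says that the element `g ∈ PGL(2,K)` sends the point `z` of the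
projective line to the point `w` (via any matrix representative of `g`; the center acts
trivially, so this does not depend on the representative). -/
def PGL2.MapsTo {K : Type*} [Field K] (g : PGL2 K) (z w : ProjLine K) : Prop :=
  ∀ A : GL (Fin 2) K, (QuotientGroup.mk A : PGL2 K) = g → GL2.onProj A z = w

/-- `z` is a fixed point of `g ∈ PGL(2,K)` acting on the projective line. -/
def PGL2.Fixes {K : Type*} [Field K] (g : PGL2 K) (z : ProjLine K) : Prop :=
  PGL2.MapsTo g z z

/-- The set of fixed points of `g ∈ PGL(2,K)` on the projective line. -/
def PGL2.fixedPts {K : Type*} [Field K] (g : PGL2 K) : Set (ProjLine K) :=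
  {z | PGL2.Fixes g z}

section Aux
variable {K : Type*} [Field K]

lemma GL2.center_scalar {C : GL (Fin 2) K}
    (hC : C ∈ Subgroup.center (GL (Fin 2) K)) : ∃ c : K, C.val = c • 1 := by
  rw [Subgroup.mem_center_iff] at hC
  have hprod1 : !![(1:K),1;0,1] * !![1,-1;0,1] = 1 := by
    rw [Matrix.mul_fin_two, Matrix.one_fin_two]; norm_num
  have hprod1' : !![(1:K),-1;0,1] * !![1,1;0,1] = 1 := by
    rw [Matrix.mul_fin_two, Matrix.one_fin_two]; norm_num
  have hprod2 : !![(1:K),0;1,1] * !![1,0;-1,1] = 1 := by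
    rw [Matrix.mul_fin_two, Matrix.one_fin_two]; norm_num
  have hprod2' : !![(1:K),0;-1,1] * !![1,0;1,1] = 1 := by
    rw [Matrix.mul_fin_two, Matrix.one_fin_two]; norm_num
  have h1 : !![(1:K),1;0,1] * C.val = C.val * !![1,1;0,1] :=
    congrArg Units.val (hC ⟨!![1,1;0,1], !![1,-1;0,1], hprod1, hprod1'⟩)
  have h2 : !![(1:K),0;1,1] * C.val = C.val * !![1,0;1,1] :=
    congrArg Units.val (hC ⟨!![1,0;1,1], !![1,0;-1,1], hprod2, hprod2'⟩)
  rw [Matrix.eta_fin_two C.val, Matrix.mul_fin_two, Matrix.mul_fin_two] at h1 h2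
  have e1 := fun i j => congrFun (congrFun h1 i) j
  have e2 := fun i j => congrFun (congrFun h2 i) j
  have q1 := e1 0 0; have q2 := e1 0 1
  have r1 := e2 0 0; have r3 := e2 1 0
  simp at q1 q2 r1 r3
  refine ⟨C.val 0 0, ?_⟩
  have h10 : C.val 1 0 = 0 := q1
  have h01 : C.val 0 1 = 0 := r1
  have h11 : C.val 1 1 = C.val 0 0 := by linear_combination q2
  rw [Matrix.eta_fin_two C.val, h10, h01, h11, Matrix.smul_one_eq_diagonal]
  ext i j
  fin_cases i <;> fin_cases j <;> simp

lemma GL2.mulVec_ne_zero (A : GL (Fin 2) K) {v : Fin 2 → K} (hv : v ≠ 0) :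
    A.val *ᵥ v ≠ 0 := by
  intro h
  apply hv
  have : A⁻¹.val *ᵥ (A.val *ᵥ v) = v := by
    rw [Matrix.mulVec_mulVec, show A⁻¹.val * A.val = 1 from by exact_mod_cast A.inv_mul]
    simp
  rw [h, Matrix.mulVec_zero] at this
  exact this.symm

lemma GL2.onProj_mk (A : GL (Fin 2) K) (v : Fin 2 → K) (hv : v ≠ 0) :
    GL2.onProj A (Projectivization.mk K v hv) =
      Projectivization.mk K (A.val *ᵥ v) (GL2.mulVec_ne_zero A hv) := rfl

lemma GL2.onProj_mul (A B : GL (Fin 2) K) (z : ProjLine K) :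
    GL2.onProj (A * B) z = GL2.onProj A (GL2.onProj B z) := by
  induction z using Projectivization.ind with
  | h v hv =>
    rw [GL2.onProj_mk, GL2.onProj_mk, GL2.onProj_mk]
    congr 1
    rw [Units.val_mul, ← Matrix.mulVec_mulVec]

lemma GL2.onProj_center {C : GL (Fin 2) K}
    (hC : C ∈ Subgroup.center (GL (Fin 2) K)) (z : ProjLine K) :
    GL2.onProj C z = z := by
  obtain ⟨c, hc⟩ := GL2.center_scalar hC
  induction z using Projectivization.ind with
  | h v hv =>
    rw [GL2.onProj_mk]
    apply (Projectivization.mk_eq_mk_iff' K _ _ _ hv).2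
    exact ⟨c, by rw [hc]; simp [Matrix.smul_mulVec]⟩

lemma PGL2.fixes_iff {g : PGL2 K} {A : GL (Fin 2) K}
    (hA : (QuotientGroup.mk A : PGL2 K) = g) (z : ProjLine K) :
    PGL2.Fixes g z ↔ GL2.onProj A z = z := by
  constructor
  · exact fun H => H A hA
  · intro H A' hA'
    have hc : A⁻¹ * A' ∈ Subgroup.center (GL (Fin 2) K) := by
      rw [← QuotientGroup.eq_one_iff]
      rw [QuotientGroup.mk_mul, QuotientGroup.mk_inv, hA, hA']
      simp
    have : A' = A * (A⁻¹ * A') := by group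
    rw [this, GL2.onProj_mul, GL2.onProj_center hc, H]

lemma Subgroup.exists_pow_eq_one' {H : Subgroup (PGL2 K)} [Finite H] {g : PGL2 K}
    (hg : g ∈ H) : ∃ n : ℕ, 0 < n ∧ g ^ n = 1 := by
  have : IsOfFinOrder (⟨g, hg⟩ : H) := isOfFinOrder_of_finite _
  obtain ⟨n, hn, hgn⟩ := this.exists_pow_eq_one
  refine ⟨n, hn, ?_⟩
  have := congrArg (Subtype.val) hgn
  simpa using this

lemma GL2.det_sub_smul_one (M : Matrix (Fin 2) (Fin 2) K) (t : K) :
    det (M - t • 1) = t^2 - (M 0 0 + M 1 1) * t + det M := by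
  simp [Matrix.det_fin_two, Matrix.sub_apply, Matrix.smul_apply, Matrix.one_apply]
  ring

lemma GL2.ch2 (M : Matrix (Fin 2) (Fin 2) K) :
    M * M - (M 0 0 + M 1 1) • M + (det M) • 1 = 0 := by
  ext i j
  fin_cases i <;> fin_cases j <;>
    simp [Matrix.mul_apply, Fin.sum_univ_two, Matrix.det_fin_two, Matrix.sub_apply,
      Matrix.smul_apply, Matrix.one_apply, Matrix.add_apply] <;> ring

lemma GL2.nilp_pow {N : Matrix (Fin 2) (Fin 2) K} (hNN : N * N = 0) (α : K) (k : ℕ) :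
    (α • 1 + N) ^ (k+1) = α ^ (k+1) • (1 : Matrix (Fin 2) (Fin 2) K)
      + (((k:K)+1) * α ^ k) • N := by
  induction k with
  | zero => simp
  | succ k ih =>
    rw [pow_succ, ih]
    simp only [add_mul, mul_add, Matrix.smul_mul, Matrix.mul_smul, hNN, smul_zero,
      add_zero, one_mul, mul_one, smul_smul]
    push_cast
    match_scalars <;> ring

lemma GL2.pow_scalar_aux [CharZero K] {M : Matrix (Fin 2) (Fin 2) K} {α : K}
    (hα : α ≠ 0) (hN : (M - α • 1) * (M - α • 1) = 0) {n : ℕ} (hn : 0 < n) {c : K}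
    (hc : M ^ n = c • 1) : M = α • 1 := by
  have hM : M = α • 1 + (M - α • 1) := by abel
  obtain ⟨m, rfl⟩ : ∃ m, n = m + 1 := ⟨n - 1, by omega⟩
  rw [hM, GL2.nilp_pow hN] at hc
  have hsm : (((m:K)+1) * α ^ m) • (M - α • 1)
      = (c - α ^ (m+1)) • (1 : Matrix (Fin 2) (Fin 2) K) := by
    have := sub_eq_of_eq_add' hc.symm
    rw [← this]
    rw [sub_smul]
  have ht : ((m:K)+1) * α ^ m ≠ 0 := by
    apply mul_ne_zero _ (pow_ne_zero _ hα)
    exact Nat.cast_add_one_ne_zero m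
  have hNs : M - α • 1 = (((m:K)+1) * α ^ m)⁻¹ • ((c - α ^ (m+1)) • (1 : Matrix (Fin 2) (Fin 2) K)) := by
    rw [← hsm, smul_smul, inv_mul_cancel₀ ht, one_smul]
  set s : K := (((m:K)+1) * α ^ m)⁻¹ * (c - α ^ (m+1)) with hs
  rw [smul_smul, ← hs] at hNs
  have hss : s * s = 0 := by
    have := hN
    rw [hNs, Matrix.smul_mul, Matrix.mul_smul, smul_smul, one_mul] at this
    have h00 := congrFun (congrFun this 0) 0
    simpa using h00
  rw [mul_self_eq_zero.mp hss, zero_smul, sub_eq_zero] at hNs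
  exact hNs

lemma GL2.exists_second_eigenvector [CharZero K] {M : Matrix (Fin 2) (Fin 2) K}
    (hns : ∀ c : K, M ≠ c • 1) {v : Fin 2 → K} (hv : v ≠ 0) {α : K} (hα0 : α ≠ 0)
    (hαv : M *ᵥ v = α • v) {n : ℕ} (hn : 0 < n) {c : K} (hc : M ^ n = c • 1) :
    ∃ (β : K) (w : Fin 2 → K), w ≠ 0 ∧ M *ᵥ w = β • w ∧ β ≠ α := by
  have hdetα : det (M - α • 1) = 0 := by
    rw [← Matrix.exists_mulVec_eq_zero_iff]
    refine ⟨v, hv, ?_⟩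
    rw [Matrix.sub_mulVec, hαv, Matrix.smul_mulVec, Matrix.one_mulVec, sub_self]
  have hq : α^2 - (M 0 0 + M 1 1) * α + det M = 0 := by
    rw [← GL2.det_sub_smul_one]; exact hdetα
  set β : K := M 0 0 + M 1 1 - α with hβ
  by_cases hβα : β = α
  · exfalso
    have htr : M 0 0 + M 1 1 = 2*α := by linear_combination hβα
    have h2 : (M - α • 1) * (M - α • 1) = 0 := by
      have hch := GL2.ch2 M
      have hMM : M * M = (M 0 0 + M 1 1) • M - (det M) • (1 : Matrix (Fin 2) (Fin 2) K) := by
        rw [← sub_eq_zero]; rw [← hch]; abel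
      rw [sub_mul, mul_sub, mul_sub, hMM]
      simp only [Matrix.smul_mul, Matrix.mul_smul, mul_one, one_mul, smul_smul]
      match_scalars
      · linear_combination htr
      · linear_combination -hq - α * htr
    exact hns α (GL2.pow_scalar_aux hα0 h2 hn hc)
  · have hdetβ : det (M - β • 1) = 0 := by
      rw [GL2.det_sub_smul_one, hβ]
      linear_combination hq
    obtain ⟨w, hw, hww⟩ := Matrix.exists_mulVec_eq_zero_iff.mpr hdetβ
    refine ⟨β, w, hw, ?_, hβα⟩
    rw [Matrix.sub_mulVec, Matrix.smul_mulVec, Matrix.one_mulVec, sub_eq_zero] at hww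
    exact hww

end Aux

lemma GL2.scalar_mem_center {K : Type*} [Field K] {C : GL (Fin 2) K} {c : K}
    (h : C.val = c • 1) : C ∈ Subgroup.center (GL (Fin 2) K) := by
  rw [Subgroup.mem_center_iff]
  intro g
  ext : 1
  show g.val * C.val = C.val * g.val
  rw [h]
  simp [Matrix.smul_mul, Matrix.mul_smul]

lemma GL2.left_right_inv {R : Type*} [Monoid R] {m x y : R} (hx : x * m = 1)
    (hy : m * y = 1) : x = y := by
  rw [← one_mul y, ← hx, mul_assoc, hy, mul_one]

lemma GL2.unip_pow {K : Type*} [Field K] (t : K) (m : ℕ) :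
    (!![1, t; 0, 1] : Matrix (Fin 2) (Fin 2) K) ^ m = !![1, (m : K) * t; 0, 1] := by
  induction m with
  | zero => rw [pow_zero, Matrix.one_fin_two]; norm_num
  | succ m ih =>
    rw [pow_succ, ih, Matrix.mul_fin_two]
    push_cast
    ext i j
    fin_cases i <;> fin_cases j <;> simp <;> ring

lemma GL2.eigen_criterion {K : Type*} [Field K] {M : Matrix (Fin 2) (Fin 2) K}
    (b : Module.Basis (Fin 2) K (Fin 2 → K)) {α β : K} (hαβ : α ≠ β)
    (h0 : M *ᵥ b 0 = α • b 0) (h1 : M *ᵥ b 1 = β • b 1) (u : Fin 2 → K) :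
    (∃ s : K, M *ᵥ u = s • u) ↔ (b.repr u 0 = 0 ∨ b.repr u 1 = 0) := by
  have hu' : u = b.repr u 0 • b 0 + b.repr u 1 • b 1 := by
    have := b.sum_repr u
    rw [Fin.sum_univ_two] at this
    exact this.symm
  have hMu : M *ᵥ u = (α * b.repr u 0) • b 0 + (β * b.repr u 1) • b 1 := by
    conv_lhs => rw [hu']
    rw [Matrix.mulVec_add, Matrix.mulVec_smul, Matrix.mulVec_smul, h0, h1,
      smul_smul, smul_smul, mul_comm (b.repr u 0) α, mul_comm (b.repr u 1) β]
  have hrep : ∀ (x y : K), b.repr (x • b 0 + y • b 1) 0 = x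
      ∧ b.repr (x • b 0 + y • b 1) 1 = y := by
    intro x y
    constructor <;>
      simp [map_add, _root_.map_smul, Module.Basis.repr_self, Finsupp.smul_apply, Finsupp.single_apply]
  constructor
  · rintro ⟨s, hs⟩
    by_contra hcon
    push_neg at hcon
    obtain ⟨hc0, hc1⟩ := hcon
    have h0' : α * b.repr u 0 = s * b.repr u 0 := by
      have := congrArg (fun f => b.repr f 0) hs
      simpa [hMu, _root_.map_smul, (hrep _ _).1, Finsupp.smul_apply] using
        (by rw [hMu] at hs
            have e0 := congrArg (fun f => b.repr f 0) hs
            simpa [_root_.map_smul, (hrep _ _).1, Finsupp.smul_apply] using e0)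
    have h1' : β * b.repr u 1 = s * b.repr u 1 := by
      rw [hMu] at hs
      have e1 := congrArg (fun f => b.repr f 1) hs
      simpa [_root_.map_smul, (hrep _ _).2, Finsupp.smul_apply] using e1
    apply hαβ
    have hsα : α = s := by
      have := mul_right_cancel₀ hc0 h0'
      exact this
    have hsβ : β = s := mul_right_cancel₀ hc1 h1'
    rw [hsα, hsβ]
  · rintro (hc | hc)
    · refine ⟨β, ?_⟩
      rw [hMu, hc]
      conv_rhs => rw [hu', hc]
      simp [smul_smul]
    · refine ⟨α, ?_⟩
      rw [hMu, hc]
      conv_rhs => rw [hu', hc]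
      simp [smul_smul]

/-- Let `K` be an algebraically closed field of characteristic zero, `G` a finite subgroup
of `PGL(2,K)`, and `g, h` nontrivial elements of `G` having a common fixed point
`z ∈ P¹(K)`.  Then `g` and `h` commute and have the same set of fixed points. -/
theorem common_fixed_point_in_finite_subgroup
    (K : Type*) [Field K] [IsAlgClosed K] [CharZero K]
    (G : Subgroup (PGL2 K)) [Finite G]
    (g h : PGL2 K) (hgG : g ∈ G) (hhG : h ∈ G) (hg1 : g ≠ 1) (hh1 : h ≠ 1)
    (z : ProjLine K) (hgz : PGL2.Fixes g z) (hhz : PGL2.Fixes h z) :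
    g * h = h * g ∧ PGL2.fixedPts g = PGL2.fixedPts h := by
  obtain ⟨A, hA⟩ := QuotientGroup.mk_surjective g
  obtain ⟨B, hB⟩ := QuotientGroup.mk_surjective h
  -- A and B are not scalar
  have hAns : ∀ c : K, A.val ≠ c • 1 := by
    intro c hcon
    exact hg1 (by rw [← hA, QuotientGroup.eq_one_iff]; exact GL2.scalar_mem_center hcon)
  have hBns : ∀ c : K, B.val ≠ c • 1 := by
    intro c hcon
    exact hh1 (by rw [← hB, QuotientGroup.eq_one_iff]; exact GL2.scalar_mem_center hcon)
  -- the common eigenvector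
  set v : Fin 2 → K := z.rep with hvdef
  have hv : v ≠ 0 := z.rep_nonzero
  have hzv : Projectivization.mk K v hv = z := z.mk_rep
  have eig : ∀ C : GL (Fin 2) K, GL2.onProj C z = z → ∃ s : K, s ≠ 0 ∧ C.val *ᵥ v = s • v := by
    intro C hC
    rw [← hzv, GL2.onProj_mk] at hC
    obtain ⟨s, hs⟩ := (Projectivization.mk_eq_mk_iff' K _ _ _ hv).1 hC
    refine ⟨s, ?_, hs.symm⟩
    intro h0
    exact GL2.mulVec_ne_zero C hv (by rw [← hs, h0, zero_smul])
  obtain ⟨α, hα0, hαv⟩ := eig A ((PGL2.fixes_iff hA z).1 hgz)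
  obtain ⟨μ, hμ0, hμv⟩ := eig B ((PGL2.fixes_iff hB z).1 hhz)
  -- finite order mod center
  have powScalar : ∀ (x : PGL2 K) (C : GL (Fin 2) K), (QuotientGroup.mk C : PGL2 K) = x →
      x ∈ G → ∃ (n : ℕ) (c : K), 0 < n ∧ C.val ^ n = c • 1 := by
    intro x C hC hxG
    obtain ⟨n, hn, hxn⟩ := Subgroup.exists_pow_eq_one' hxG
    have hcen : C ^ n ∈ Subgroup.center (GL (Fin 2) K) := by
      rw [← QuotientGroup.eq_one_iff]
      rw [show (QuotientGroup.mk (C ^ n) : PGL2 K) = (QuotientGroup.mk C : PGL2 K) ^ n from rfl,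
        hC, hxn]
    obtain ⟨c, hc⟩ := GL2.center_scalar hcen
    exact ⟨n, c, hn, by rw [← Units.val_pow_eq_pow_val]; exact hc⟩
  obtain ⟨n, c, hn, hAn⟩ := powScalar g A hA hgG
  obtain ⟨m, d, hm, hBm⟩ := powScalar h B hB hhG
  -- second eigenvector of A
  obtain ⟨β, w, hw, hβw, hβα⟩ := GL2.exists_second_eigenvector hAns hv hα0 hαv hn hAn
  have hβ0 : β ≠ 0 := by
    intro h0
    exact GL2.mulVec_ne_zero A hw (by rw [hβw, h0, zero_smul])
  -- basis of eigenvectors of A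
  have hli : LinearIndependent K ![v, w] := by
    rw [LinearIndependent.pair_iff' hv]
    intro a ha
    have h1 : A.val *ᵥ (a • v) = β • (a • v) := by rw [ha]; exact hβw
    rw [Matrix.mulVec_smul, hαv, smul_smul, smul_smul] at h1
    have : (a * α - β * a) • v = 0 := by rw [sub_smul, h1, sub_self]
    have ha0 : a = 0 := by
      rcases smul_eq_zero.mp this with h' | h'
      · rcases mul_eq_zero.mp (by linear_combination h' : a * (α - β) = 0) with h'' | h''
        · exact h''
        · exact absurd (by linear_combination h'' : α = β) (fun hh => hβα hh.symm)
      · exact absurd h' hv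
    rw [ha0, zero_smul] at ha
    exact hw ha.symm
  let b : Module.Basis (Fin 2) K (Fin 2 → K) :=
    basisOfLinearIndependentOfCardEqFinrank hli (by simp)
  have hb : ⇑b = ![v, w] := coe_basisOfLinearIndependentOfCardEqFinrank hli _
  have hb0 : b 0 = v := by rw [hb]; rfl
  have hb1 : b 1 = w := by rw [hb]; rfl
  -- the change-of-basis algebra isomorphism
  let ψ : Matrix (Fin 2) (Fin 2) K ≃ₐ[K] Matrix (Fin 2) (Fin 2) K :=
    Matrix.toLinAlgEquiv'.trans (LinearMap.toMatrixAlgEquiv b)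
  have ψ_entry : ∀ (M : Matrix (Fin 2) (Fin 2) K) (i j : Fin 2),
      ψ M i j = b.repr (M *ᵥ b j) i := by
    intro M i j
    simp [ψ, LinearMap.toMatrixAlgEquiv_apply, Matrix.toLinAlgEquiv'_apply]
  have ψ_scalar : ∀ c : K, ψ (c • 1) = c • 1 := by
    intro c
    rw [_root_.map_smul, _root_.map_one]
  -- matrix of A in basis b
  have repr_smul0 : ∀ (s : K), b.repr (s • b 0) = s • Finsupp.single 0 1 := by
    intro s; rw [_root_.map_smul, Module.Basis.repr_self]
  have repr_smul1 : ∀ (s : K), b.repr (s • b 1) = s • Finsupp.single 1 1 := by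
    intro s; rw [_root_.map_smul, Module.Basis.repr_self]
  have hMA : ψ A.val = !![α, 0; 0, β] := by
    ext i j
    rw [ψ_entry]
    fin_cases j
    · rw [show (⟨0, by omega⟩ : Fin 2) = 0 from rfl, hb0, hαv, ← hb0, repr_smul0]
      fin_cases i <;> simp [Finsupp.single_apply]
    · rw [show (⟨1, by omega⟩ : Fin 2) = 1 from rfl, hb1, hβw, ← hb1, repr_smul1]
      fin_cases i <;> simp [Finsupp.single_apply]
  -- matrix of B in basis b
  set p : K := ψ B.val 0 1 with hpdef
  set q : K := ψ B.val 1 1 with hqdef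
  have hMB : ψ B.val = !![μ, p; 0, q] := by
    ext i j
    fin_cases j
    · rw [show (⟨0, by omega⟩ : Fin 2) = 0 from rfl, ψ_entry, hb0, hμv, ← hb0, repr_smul0]
      fin_cases i <;> simp [Finsupp.single_apply]
    · rw [show (⟨1, by omega⟩ : Fin 2) = 1 from rfl]
      fin_cases i <;> simp [hpdef, hqdef]
  -- A and B powers are scalar in the new basis as well
  have hMAn : (!![α, 0; 0, β]) ^ n = c • (1 : Matrix (Fin 2) (Fin 2) K) := by
    rw [← hMA, ← _root_.map_pow, hAn, ψ_scalar]
  have hMBm : (!![μ, p; 0, q]) ^ m = d • (1 : Matrix (Fin 2) (Fin 2) K) := by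
    rw [← hMB, ← _root_.map_pow, hBm, ψ_scalar]
  -- q is nonzero
  have hBinv : (!![μ, p; 0, q]) * ψ (B⁻¹).val = 1 := by
    rw [← hMB, ← _root_.map_mul, show B.val * (B⁻¹).val = 1 from by exact_mod_cast B.mul_inv,
      _root_.map_one]
  have hq0 : q ≠ 0 := by
    intro h0
    have hdet := congrArg Matrix.det hBinv
    rw [Matrix.det_mul, Matrix.det_one, Matrix.det_fin_two_of, h0] at hdet
    simp at hdet
  -- q ≠ μ (B has distinct eigenvalues)
  have hqμ : q ≠ μ := by
    intro h0
    apply hBns μ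
    apply ψ.injective
    rw [hMB, ψ_scalar]
    apply GL2.pow_scalar_aux hμ0 _ hm hMBm
    ext i j
    fin_cases i <;> fin_cases j <;>
      simp [Matrix.mul_apply, Fin.sum_univ_two, Matrix.sub_apply, Matrix.smul_apply,
        Matrix.one_apply, h0]
  -- inverses in the new basis
  have hAinvψ : ψ (A⁻¹).val = !![α⁻¹, 0; 0, β⁻¹] := by
    apply GL2.left_right_inv (m := !![α, 0; 0, β])
    · rw [← hMA, ← _root_.map_mul,
        show (A⁻¹).val * A.val = 1 from by exact_mod_cast A.inv_mul, _root_.map_one]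
    · ext i j
      fin_cases i <;> fin_cases j <;>
        simp [Matrix.mul_apply, Fin.sum_univ_two, Matrix.one_apply,
          mul_inv_cancel₀ hα0, mul_inv_cancel₀ hβ0]
  have hBinvψ : ψ (B⁻¹).val = !![μ⁻¹, -(p * (μ⁻¹ * q⁻¹)); 0, q⁻¹] := by
    apply GL2.left_right_inv (m := !![μ, p; 0, q])
    · rw [← hMB, ← _root_.map_mul,
        show (B⁻¹).val * B.val = 1 from by exact_mod_cast B.inv_mul, _root_.map_one]
    · ext i j
      fin_cases i <;> fin_cases j <;>
        simp [Matrix.mul_apply, Fin.sum_univ_two, Matrix.one_apply,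
          mul_inv_cancel₀ hμ0, mul_inv_cancel₀ hq0]
      field_simp
      ring
  set t : K := p * q⁻¹ * (α * β⁻¹ - 1) with htdef
  have hMC : ψ (A * B * A⁻¹ * B⁻¹).val = !![1, t; 0, 1] := by
    rw [show (A * B * A⁻¹ * B⁻¹).val = A.val * B.val * (A⁻¹).val * (B⁻¹).val from rfl,
      _root_.map_mul, _root_.map_mul, _root_.map_mul, hMA, hMB, hAinvψ, hBinvψ]
    ext i j
    fin_cases i <;> fin_cases j <;>
      simp [Matrix.mul_apply, Fin.sum_univ_two, htdef] <;> field_simp <;> ring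
  have hkG : g * h * g⁻¹ * h⁻¹ ∈ G :=
    mul_mem (mul_mem (mul_mem hgG hhG) (inv_mem hgG)) (inv_mem hhG)
  have hkC : (QuotientGroup.mk (A * B * A⁻¹ * B⁻¹) : PGL2 K) = g * h * g⁻¹ * h⁻¹ := by
    rw [QuotientGroup.mk_mul, QuotientGroup.mk_mul, QuotientGroup.mk_mul,
      QuotientGroup.mk_inv, QuotientGroup.mk_inv, hA, hB]
  obtain ⟨r, e, hr, hCr⟩ := powScalar _ _ hkC hkG
  have hCr' : (!![1, t; 0, 1] : Matrix (Fin 2) (Fin 2) K) ^ r = e • 1 := by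
    rw [← hMC, ← _root_.map_pow, hCr, ψ_scalar]
  rw [GL2.unip_pow] at hCr'
  have ht0 : t = 0 := by
    have h01 := congrFun (congrFun hCr' 0) 1
    simp [Matrix.smul_apply, Matrix.one_apply] at h01
    rcases h01 with h01 | h01
    · exact absurd (by exact_mod_cast h01) hr.ne'
    · exact h01
  have hp0 : p = 0 := by
    have hfac : α * β⁻¹ - 1 ≠ 0 := by
      intro h0
      apply hβα
      have : α * β⁻¹ = 1 := by linear_combination h0
      field_simp at this
      exact this.symm
    have hq' : q⁻¹ ≠ 0 := inv_ne_zero hq0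
    have := ht0
    rw [htdef] at this
    rcases mul_eq_zero.mp this with h' | h'
    · rcases mul_eq_zero.mp h' with h'' | h''
      · exact h''
      · exact absurd h'' hq'
    · exact absurd h' hfac
  have hMBd : ψ B.val = !![μ, 0; 0, q] := by rw [hMB, hp0]
  have hABBA : A.val * B.val = B.val * A.val := by
    apply ψ.injective
    rw [_root_.map_mul, _root_.map_mul, hMA, hMBd]
    ext i j
    fin_cases i <;> fin_cases j <;>
      simp [Matrix.mul_apply, Fin.sum_univ_two] <;> ring
  constructor
  · rw [← hA, ← hB, ← QuotientGroup.mk_mul, ← QuotientGroup.mk_mul]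
    exact congrArg _ (Units.ext hABBA)
  · have hAv' : A.val *ᵥ b 0 = α • b 0 := by rw [hb0]; exact hαv
    have hAw' : A.val *ᵥ b 1 = β • b 1 := by rw [hb1]; exact hβw
    have hBv' : B.val *ᵥ b 0 = μ • b 0 := by rw [hb0]; exact hμv
    have hBw' : B.val *ᵥ b 1 = q • b 1 := by
      apply b.repr.injective
      ext i
      rw [← ψ_entry, hMBd, repr_smul1]
      fin_cases i <;> simp [Finsupp.single_apply]
    ext z'
    simp only [PGL2.fixedPts, Set.mem_setOf_eq]
    rw [PGL2.fixes_iff hA, PGL2.fixes_iff hB]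
    have hu : z'.rep ≠ 0 := z'.rep_nonzero
    conv_lhs => rw [← z'.mk_rep]
    conv_rhs => rw [← z'.mk_rep]
    rw [GL2.onProj_mk, GL2.onProj_mk,
      Projectivization.mk_eq_mk_iff' K _ _ _ hu, Projectivization.mk_eq_mk_iff' K _ _ _ hu]
    have cA := GL2.eigen_criterion b (show α ≠ β from fun hh => hβα hh.symm) hAv' hAw' z'.rep
    have cB := GL2.eigen_criterion b (show μ ≠ q from fun hh => hqμ hh.symm) hBv' hBw' z'.rep
    constructor
    · rintro ⟨s, hs⟩
      obtain ⟨s', hs'⟩ := cB.2 (cA.1 ⟨s, hs.symm⟩)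
      exact ⟨s', hs'.symm⟩
    · rintro ⟨s, hs⟩
      obtain ⟨s', hs'⟩ := cA.2 (cB.1 ⟨s, hs.symm⟩)
      exact ⟨s', hs'.symm⟩
end

section
/- Let p be a prime, K a finite extension of ℚ_p, and Γ a discrete subgroup of PGL(2,K). If two elements γ₁, γ₂ ∈ Γ have a common fixed point in P¹(K), then γ₁ and γ₂ commute. -/
open Matrix

open Filter
open commutatorElement

section Aux
variable {K : Type*} [Field K]

lemma eig_of_onProj_fixed (A : GL (Fin 2) K) (z : ProjLine K)
    (h : GL2.onProj A z = z) :
    ∃ lam : Kˣ, (A : Matrix (Fin 2) (Fin 2) K) *ᵥ z.rep = (lam : K) • z.rep := by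
  have hz : Projectivization.mk K z.rep z.rep_nonzero = z := z.mk_rep
  rw [← hz, GL2.onProj, Projectivization.map_mk, Projectivization.mk_eq_mk_iff] at h
  obtain ⟨a, ha⟩ := h
  refine ⟨a, ?_⟩
  have : (LinearMap.GeneralLinearGroup.toLinearEquiv
      (Matrix.GeneralLinearGroup.toLin A)).toLinearMap z.rep
      = (A : Matrix (Fin 2) (Fin 2) K) *ᵥ z.rep := by
    simp [Matrix.GeneralLinearGroup.toLin_apply]
  rw [this] at ha
  rw [← ha, Units.smul_def]

lemma center_val_scalar (g : GL (Fin 2) K) (hg : g ∈ Subgroup.center (GL (Fin 2) K)) :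
    ∃ r : K, (g : Matrix (Fin 2) (Fin 2) K) = Matrix.scalar (Fin 2) r := by
  have hc : ∀ t : TransvectionStruct (Fin 2) K,
      Commute t.toMatrix (g : Matrix (Fin 2) (Fin 2) K) := by
    intro t
    have hT : Matrix.det t.toMatrix ≠ 0 := by rw [t.det]; exact one_ne_zero
    have := (Subgroup.mem_center_iff.mp hg) (Matrix.GeneralLinearGroup.mkOfDetNeZero t.toMatrix hT)
    have := congrArg Units.val this
    exact this
  obtain ⟨r, hr⟩ := Matrix.mem_range_scalar_of_commute_transvectionStruct hc
  exact ⟨r, hr.symm⟩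

lemma eig_inv (A : GL (Fin 2) K) (v : Fin 2 → K) (lam : Kˣ)
    (h : (A : Matrix (Fin 2) (Fin 2) K) *ᵥ v = (lam : K) • v) :
    (A⁻¹ : GL (Fin 2) K).val *ᵥ v = ((lam⁻¹ : Kˣ) : K) • v := by
  have h1 : (A⁻¹ : GL (Fin 2) K).val *ᵥ ((A : Matrix (Fin 2) (Fin 2) K) *ᵥ v) = v := by
    rw [Matrix.mulVec_mulVec, ← Units.val_mul, inv_mul_cancel, Units.val_one, Matrix.one_mulVec]
  rw [h, Matrix.mulVec_smul] at h1
  calc (A⁻¹ : GL (Fin 2) K).val *ᵥ v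
      = ((lam⁻¹ : Kˣ) : K) • ((lam : K) • ((A⁻¹ : GL (Fin 2) K).val *ᵥ v)) := by
        rw [smul_smul]
        norm_num
    _ = ((lam⁻¹ : Kˣ) : K) • v := by rw [h1]

lemma pow_one_add_sq_zero (N : Matrix (Fin 2) (Fin 2) K) (hNN : N * N = 0) (k : ℕ) :
    (1 + N) ^ k = 1 + (k : K) • N := by
  induction k with
  | zero => simp
  | succ k ih =>
    rw [pow_succ, ih, mul_add, mul_one, add_mul, one_mul, Matrix.smul_mul, hNN, smul_zero,
      add_zero]
    push_cast
    rw [add_smul, one_smul]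
    abel
end Aux

example (K : Type*) [Field K] (A₁ A₂ : GL (Fin 2) K) (v : Fin 2 → K) (l₁ l₂ : Kˣ)
    (hl₁ : (A₁ : Matrix (Fin 2) (Fin 2) K) *ᵥ v = (l₁ : K) • v)
    (hl₂ : (A₂ : Matrix (Fin 2) (Fin 2) K) *ᵥ v = (l₂ : K) • v) :
    ((A₁ * A₂ * A₁⁻¹ * A₂⁻¹ : GL (Fin 2) K) : Matrix (Fin 2) (Fin 2) K) *ᵥ v = v := by
  have e1 := eig_inv A₁ v l₁ hl₁
  have e2 := eig_inv A₂ v l₂ hl₂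
  have hsplit : ((A₁ * A₂ * A₁⁻¹ * A₂⁻¹ : GL (Fin 2) K) : Matrix (Fin 2) (Fin 2) K) *ᵥ v
      = (A₁ : Matrix (Fin 2) (Fin 2) K) *ᵥ ((A₂ : Matrix (Fin 2) (Fin 2) K) *ᵥ
        (((A₁⁻¹ : GL (Fin 2) K) : Matrix (Fin 2) (Fin 2) K) *ᵥ
         (((A₂⁻¹ : GL (Fin 2) K) : Matrix (Fin 2) (Fin 2) K) *ᵥ v))) := by
    simp only [Units.val_mul, Matrix.mulVec_mulVec, mul_assoc]
  rw [hsplit, e2]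
  simp only [Matrix.mulVec_smul]
  rw [e1]
  simp only [Matrix.mulVec_smul]
  rw [hl₂]
  simp only [Matrix.mulVec_smul]
  rw [hl₁, smul_smul, smul_smul, smul_smul]
  have hco : ((l₂⁻¹ : Kˣ) : K) * ((l₁⁻¹ : Kˣ) : K) * (l₂ : K) * (l₁ : K) = 1 := by
    norm_cast
    rw [Units.val_eq_one, show l₂⁻¹ * l₁⁻¹ * l₂ * l₁ = (l₂⁻¹ * l₂) * (l₁⁻¹ * l₁) by ac_rfl]
    simp
  rw [hco, one_smul]

lemma N_sq_zero {K : Type*} [Field K] (M : Matrix (Fin 2) (Fin 2) K) (v : Fin 2 → K)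
    (hv0 : v ≠ 0) (hBv : M *ᵥ v = v) (hdet : M.det = 1) :
    (M - 1) * (M - 1) = 0 := by
  set N : Matrix (Fin 2) (Fin 2) K := M - 1 with hN
  have hNv : N *ᵥ v = 0 := by
    rw [hN, Matrix.sub_mulVec, hBv, Matrix.one_mulVec, sub_self]
  have hdN : N.det = 0 := by
    rw [← Matrix.exists_mulVec_eq_zero_iff]
    exact ⟨v, hv0, hNv⟩
  rw [Matrix.det_fin_two] at hdN hdet
  have hN00 : N 0 0 = M 0 0 - 1 := by simp [hN]
  have hN01 : N 0 1 = M 0 1 := by simp [hN, Matrix.one_apply]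
  have hN10 : N 1 0 = M 1 0 := by simp [hN, Matrix.one_apply]
  have hN11 : N 1 1 = M 1 1 - 1 := by simp [hN]
  rw [hN00, hN01, hN10, hN11] at hdN
  have htr : (M 0 0 - 1) + (M 1 1 - 1) = 0 := by linear_combination hdet - hdN
  ext i j
  fin_cases i <;> fin_cases j <;>
      simp [Matrix.mul_apply, Fin.sum_univ_two, hN, Matrix.sub_apply, Matrix.one_apply] <;>
    first
    | linear_combination (M 0 0 - 1) * htr - hdN
    | linear_combination M 0 1 * htr
    | linear_combination M 1 0 * htr
    | linear_combination (M 1 1 - 1) * htr - hdN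
    | (ring_nf; linear_combination (M 0 0 - 1) * htr - hdN)
    | (ring_nf; linear_combination (M 1 1 - 1) * htr - hdN)

lemma val_inv_eq (K : Type*) [Field K] (B : GL (Fin 2) K) (N : Matrix (Fin 2) (Fin 2) K)
    (hB1 : (B : Matrix (Fin 2) (Fin 2) K) = 1 + N) (hNN : N * N = 0) :
    ((B⁻¹ : GL (Fin 2) K) : Matrix (Fin 2) (Fin 2) K) = 1 + (-N) := by
  have hmul : (B : Matrix (Fin 2) (Fin 2) K) * (1 + (-N)) = 1 := by
    have : ((1 + N) : Matrix (Fin 2) (Fin 2) K) * (1 + (-N)) = 1 + -(N * N) := by noncomm_ring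
    rw [hB1, this, hNN, neg_zero, add_zero]
  calc ((B⁻¹ : GL (Fin 2) K) : Matrix (Fin 2) (Fin 2) K)
      = ((B⁻¹ : GL (Fin 2) K) : Matrix (Fin 2) (Fin 2) K)
        * ((B : Matrix (Fin 2) (Fin 2) K) * (1 + (-N))) := by rw [hmul, mul_one]
    _ = (((B⁻¹ * B : GL (Fin 2) K)) : Matrix (Fin 2) (Fin 2) K) * (1 + (-N)) := by
        rw [Units.val_mul, mul_assoc]
    _ = 1 + (-N) := by rw [inv_mul_cancel, Units.val_one, one_mul]

lemma tendsto_pow_GL (p : ℕ) [Fact p.Prime]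
    (K : Type*) [NormedField K] [NormedAlgebra ℚ_[p] K]
    (B : GL (Fin 2) K) (N : Matrix (Fin 2) (Fin 2) K)
    (hB1 : (B : Matrix (Fin 2) (Fin 2) K) = 1 + N) (hNN : N * N = 0) :
    Filter.Tendsto (fun n : ℕ => B ^ p ^ n) atTop (nhds 1) := by
  have hnegNN : (-N) * (-N) = 0 := by rw [neg_mul_neg, hNN]
  have hval : ∀ k : ℕ, ((B ^ k : GL (Fin 2) K) : Matrix (Fin 2) (Fin 2) K)
      = 1 + (k : K) • N := by
    intro k
    rw [Units.val_pow_eq_pow_val, hB1, pow_one_add_sq_zero N hNN]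
  have hinvval : ∀ k : ℕ, (((B ^ k : GL (Fin 2) K))⁻¹ : GL (Fin 2) K).val
      = 1 + (k : K) • (-N) := by
    intro k
    rw [← inv_pow, Units.val_pow_eq_pow_val, val_inv_eq K B N hB1 hNN,
      pow_one_add_sq_zero (-N) hnegNN]
  -- scalar convergence
  have hplt : ‖((p : K))‖ < 1 := by
    have : ((p : K)) = algebraMap ℚ_[p] K ((p : ℚ_[p])) := by
      rw [map_natCast]
    rw [this, norm_algebraMap']
    exact Padic.norm_p_lt_one
  have hsc : Filter.Tendsto (fun n : ℕ => (((p ^ n : ℕ) : K))) atTop (nhds 0) := by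
    have := tendsto_pow_atTop_nhds_zero_of_norm_lt_one hplt
    simpa using this
  have hmat : ∀ (N' : Matrix (Fin 2) (Fin 2) K),
      Filter.Tendsto (fun n : ℕ => (1 : Matrix (Fin 2) (Fin 2) K) + ((p ^ n : ℕ) : K) • N')
        atTop (nhds 1) := by
    intro N'
    have h0 : Filter.Tendsto (fun n : ℕ => ((p ^ n : ℕ) : K) • N') atTop
        (nhds ((0 : K) • N')) := hsc.smul_const N'
    rw [zero_smul] at h0
    simpa using tendsto_const_nhds.add h0
  rw [Units.isInducing_embedProduct.tendsto_nhds_iff]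
  have h1 : Filter.Tendsto (fun n : ℕ => ((B ^ p ^ n : GL (Fin 2) K)).val) atTop
      (nhds (1 : Matrix (Fin 2) (Fin 2) K)) := by
    simp only [hval]
    exact hmat N
  have h2 : Filter.Tendsto (fun n : ℕ => MulOpposite.op (((B ^ p ^ n : GL (Fin 2) K))⁻¹).val)
      atTop (nhds (MulOpposite.op (1 : Matrix (Fin 2) (Fin 2) K))) := by
    apply (MulOpposite.continuous_op.tendsto _).comp
    simp only [hinvval]
    exact hmat (-N)
  exact h1.prodMk_nhds h2


/-- Let `p` be a prime, `K` a finite extension of `ℚ_p` (a normed field which is a finite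
dimensional normed `ℚ_p`-algebra), and `Γ` a discrete subgroup of `PGL(2,K)`.  If two
elements `γ₁, γ₂ ∈ Γ` have a common fixed point in `P¹(K)`, then they commute. -/
theorem discrete_subgroup_common_fixed_point_commute (p : ℕ) [Fact p.Prime]
    (K : Type*) [NormedField K] [NormedAlgebra ℚ_[p] K] [FiniteDimensional ℚ_[p] K]
    (Γ : Subgroup (PGL2 K)) [DiscreteTopology Γ]
    (γ₁ γ₂ : PGL2 K) (h₁ : γ₁ ∈ Γ) (h₂ : γ₂ ∈ Γ)
    (z : ProjLine K) (hz₁ : PGL2.Fixes γ₁ z) (hz₂ : PGL2.Fixes γ₂ z) :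
    γ₁ * γ₂ = γ₂ * γ₁ := by
  rw [← commutatorElement_eq_one_iff_mul_comm]
  obtain ⟨A₁, hA₁⟩ := QuotientGroup.mk_surjective γ₁
  obtain ⟨A₂, hA₂⟩ := QuotientGroup.mk_surjective γ₂
  have hv0 : z.rep ≠ 0 := z.rep_nonzero
  obtain ⟨l₁, hl₁⟩ := eig_of_onProj_fixed A₁ z (hz₁ A₁ hA₁)
  obtain ⟨l₂, hl₂⟩ := eig_of_onProj_fixed A₂ z (hz₂ A₂ hA₂)
  set v : Fin 2 → K := z.rep
  set B : GL (Fin 2) K := A₁ * A₂ * A₁⁻¹ * A₂⁻¹ with hB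
  set M : Matrix (Fin 2) (Fin 2) K := (B : Matrix (Fin 2) (Fin 2) K) with hM
  -- B fixes v
  have hBv : M *ᵥ v = v := by
    have e1 := eig_inv A₁ v l₁ hl₁
    have e2 := eig_inv A₂ v l₂ hl₂
    have hsplit : M *ᵥ v
        = (A₁ : Matrix (Fin 2) (Fin 2) K) *ᵥ ((A₂ : Matrix (Fin 2) (Fin 2) K) *ᵥ
          (((A₁⁻¹ : GL (Fin 2) K) : Matrix (Fin 2) (Fin 2) K) *ᵥ
           (((A₂⁻¹ : GL (Fin 2) K) : Matrix (Fin 2) (Fin 2) K) *ᵥ v))) := by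
      rw [hM, hB]
      simp only [Units.val_mul, Matrix.mulVec_mulVec, mul_assoc]
    rw [hsplit, e2]
    simp only [Matrix.mulVec_smul]
    rw [e1]
    simp only [Matrix.mulVec_smul]
    rw [hl₂]
    simp only [Matrix.mulVec_smul]
    rw [hl₁, smul_smul, smul_smul, smul_smul]
    have hco : ((l₂⁻¹ : Kˣ) : K) * ((l₁⁻¹ : Kˣ) : K) * (l₂ : K) * (l₁ : K) = 1 := by
      norm_cast
      rw [Units.val_eq_one, show l₂⁻¹ * l₁⁻¹ * l₂ * l₁ = (l₂⁻¹ * l₂) * (l₁⁻¹ * l₁) by ac_rfl]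
      simp
    rw [hco, one_smul]
  -- det B = 1
  have hdet : M.det = 1 := by
    have c1 : ((A₁ : Matrix (Fin 2) (Fin 2) K).det)
        * (((A₁⁻¹ : GL (Fin 2) K) : Matrix (Fin 2) (Fin 2) K).det) = 1 := by
      rw [← Matrix.det_mul, ← Units.val_mul, mul_inv_cancel, Units.val_one, Matrix.det_one]
    have c2 : ((A₂ : Matrix (Fin 2) (Fin 2) K).det)
        * (((A₂⁻¹ : GL (Fin 2) K) : Matrix (Fin 2) (Fin 2) K).det) = 1 := by
      rw [← Matrix.det_mul, ← Units.val_mul, mul_inv_cancel, Units.val_one, Matrix.det_one]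
    have hexp : M.det = ((A₁ : Matrix (Fin 2) (Fin 2) K).det)
        * ((A₂ : Matrix (Fin 2) (Fin 2) K).det)
        * (((A₁⁻¹ : GL (Fin 2) K) : Matrix (Fin 2) (Fin 2) K).det)
        * (((A₂⁻¹ : GL (Fin 2) K) : Matrix (Fin 2) (Fin 2) K).det) := by
      rw [hM, hB]
      simp [Units.val_mul, Matrix.det_mul]
    rw [hexp, show ((A₁ : Matrix (Fin 2) (Fin 2) K).det)
        * ((A₂ : Matrix (Fin 2) (Fin 2) K).det)
        * (((A₁⁻¹ : GL (Fin 2) K) : Matrix (Fin 2) (Fin 2) K).det)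
        * (((A₂⁻¹ : GL (Fin 2) K) : Matrix (Fin 2) (Fin 2) K).det)
        = (((A₁ : Matrix (Fin 2) (Fin 2) K).det)
            * (((A₁⁻¹ : GL (Fin 2) K) : Matrix (Fin 2) (Fin 2) K).det))
          * (((A₂ : Matrix (Fin 2) (Fin 2) K).det)
            * (((A₂⁻¹ : GL (Fin 2) K) : Matrix (Fin 2) (Fin 2) K).det)) by ring,
      c1, c2, one_mul]
  set N : Matrix (Fin 2) (Fin 2) K := M - 1 with hN
  have hNsq : N * N = 0 := N_sq_zero M v hv0 hBv hdet
  have hNv : N *ᵥ v = 0 := by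
    rw [hN, Matrix.sub_mulVec, hBv, Matrix.one_mulVec, sub_self]
  have hB1 : (B : Matrix (Fin 2) (Fin 2) K) = 1 + N := by
    rw [hN, ← hM]
    abel
  have htend := tendsto_pow_GL p K B N hB1 hNsq
  -- commutator in PGL2
  have hc : (QuotientGroup.mk B : PGL2 K) = ⁅γ₁, γ₂⁆ := by
    rw [commutatorElement_def, ← hA₁, ← hA₂, hB]
    rfl
  have hcn : ∀ n : ℕ, (⁅γ₁, γ₂⁆ : PGL2 K) ^ p ^ n = (QuotientGroup.mk (B ^ p ^ n) : PGL2 K) := by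
    intro n
    rw [QuotientGroup.mk_pow, hc]
  have hPGL : Filter.Tendsto (fun n : ℕ => (⁅γ₁, γ₂⁆ : PGL2 K) ^ p ^ n) atTop (nhds 1) := by
    simp only [hcn]
    have hcont : Continuous (QuotientGroup.mk : GL (Fin 2) K → PGL2 K) := continuous_quot_mk
    have := (hcont.tendsto 1).comp htend
    simpa [Function.comp_def] using this
  have hcommem : (⁅γ₁, γ₂⁆ : PGL2 K) ∈ Γ := by
    rw [commutatorElement_def]
    exact mul_mem (mul_mem (mul_mem h₁ h₂) (inv_mem h₁)) (inv_mem h₂)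
  set g : ℕ → Γ := fun n => ⟨(⁅γ₁, γ₂⁆ : PGL2 K) ^ p ^ n, pow_mem hcommem _⟩ with hg
  have hgt : Filter.Tendsto g atTop (nhds (⟨1, Γ.one_mem⟩ : Γ)) := by
    rw [tendsto_subtype_rng]
    exact hPGL
  rw [nhds_discrete, Filter.tendsto_pure] at hgt
  obtain ⟨n, hn⟩ := hgt.exists
  have hone : (⁅γ₁, γ₂⁆ : PGL2 K) ^ p ^ n = 1 := by
    simpa [hg, Subtype.ext_iff] using hn
  rw [hcn n] at hone
  have hmemC : B ^ p ^ n ∈ Subgroup.center (GL (Fin 2) K) :=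
    (QuotientGroup.eq_one_iff _).mp hone
  obtain ⟨r, hr⟩ := center_val_scalar _ hmemC
  have hvalpow : ((B ^ p ^ n : GL (Fin 2) K) : Matrix (Fin 2) (Fin 2) K)
      = 1 + ((p ^ n : ℕ) : K) • N := by
    rw [Units.val_pow_eq_pow_val, hB1, pow_one_add_sq_zero N hNsq]
  rw [hvalpow] at hr
  -- evaluate both sides on v
  have happ : v = r • v := by
    have h0 := congrArg (fun X : Matrix (Fin 2) (Fin 2) K => X *ᵥ v) hr
    simp only [Matrix.add_mulVec, Matrix.one_mulVec, Matrix.smul_mulVec, hNv,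
      smul_zero, add_zero] at h0
    have hsc : (Matrix.scalar (Fin 2) r) *ᵥ v = r • v := by
      ext x
      simp [Matrix.scalar, Matrix.mulVec_diagonal, Pi.smul_apply, smul_eq_mul,
        Pi.algebraMap_apply, Algebra.algebraMap_self_apply]
    exact h0.trans hsc
  have hr1 : r = 1 := by
    have hsub : (r - 1) • v = 0 := by
      rw [sub_smul, one_smul, ← happ, sub_self]
    rcases smul_eq_zero.mp hsub with h | h
    · exact sub_eq_zero.mp h
    · exact absurd h hv0
  haveI : CharZero K := charZero_of_injective_algebraMap (algebraMap ℚ_[p] K).injective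
  have hm0 : ((p ^ n : ℕ) : K) ≠ 0 :=
    Nat.cast_ne_zero.mpr (pow_ne_zero n (Nat.Prime.ne_zero Fact.out))
  have hNzero : N = 0 := by
    have : (1 : Matrix (Fin 2) (Fin 2) K) + ((p ^ n : ℕ) : K) • N = 1 := by
      rw [hr, hr1]
      simp
    have h0 : ((p ^ n : ℕ) : K) • N = 0 := by
      have := congrArg (fun X => X - (1 : Matrix (Fin 2) (Fin 2) K)) this
      simpa using this
    rcases smul_eq_zero.mp h0 with h | h
    · exact absurd h hm0
    · exact h
  have hBone : B = 1 := by
    apply Units.ext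
    rw [hB1, hNzero, add_zero, Units.val_one]
  rw [← hc, hBone]
  rfl
end

section
/- Let C, A, B be groups with injective homomorphisms φ₁ : C → A and φ₂ : C → B. The amalgamated free product A *_C B is a finite group if and only if A and B are both finite and at least one of φ₁, φ₂ is surjective. -/
open Monoid PushoutI Function

theorem amalgam_aux_word {C : Type*} [Group C] {G : Bool → Type*} [∀ i, Group (G i)]
    (φ : ∀ i, C →* G i) {a : G true} {b : G false}
    (ha : a ∉ (φ true).range) (hb : b ∉ (φ false).range) (n : ℕ) :
    ∃ w : Monoid.CoprodI.Word G, Monoid.PushoutI.Reduced φ w ∧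
      w.fstIdx = some true ∧ w.toList ≠ [] ∧
      Monoid.PushoutI.ofCoprodI w.prod =
        (Monoid.PushoutI.of (φ := φ) true a * Monoid.PushoutI.of (φ := φ) false b) ^ (n + 1) := by
  have ha1 : a ≠ 1 := by rintro rfl; exact ha (one_mem _)
  have hb1 : b ≠ 1 := by rintro rfl; exact hb (one_mem _)
  induction n with
  | zero =>
    refine ⟨Monoid.CoprodI.Word.cons a
      (Monoid.CoprodI.Word.cons b Monoid.CoprodI.Word.empty (by rintro ⟨⟩) hb1)
      (by simp [Monoid.CoprodI.Word.cons, Monoid.CoprodI.Word.fstIdx]) ha1, ?_, by simp, by simp, by rw [Monoid.CoprodI.Word.prod_cons, Monoid.CoprodI.Word.prod_cons, Monoid.CoprodI.Word.prod_empty, mul_one, map_mul, Monoid.PushoutI.ofCoprodI_of, Monoid.PushoutI.ofCoprodI_of, zero_add, pow_one]⟩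
    intro g hg
    simp only [Monoid.CoprodI.Word.cons, Monoid.CoprodI.Word.empty, List.mem_cons,
      List.mem_singleton, List.not_mem_nil, or_false] at hg
    rcases hg with rfl | rfl
    · exact ha
    · exact hb
  | succ n ih =>
    obtain ⟨w, hred, hfst, hne, hprod⟩ := ih
    refine ⟨Monoid.CoprodI.Word.cons a
      (Monoid.CoprodI.Word.cons b w (by simp [hfst]) hb1)
      (by simp) ha1, ?_, by simp, by simp, ?_⟩
    · intro g hg
      simp only [Monoid.CoprodI.Word.cons, List.mem_cons] at hg
      rcases hg with rfl | rfl | hg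
      · exact ha
      · exact hb
      · exact hred g hg
    · rw [Monoid.CoprodI.Word.prod_cons, Monoid.CoprodI.Word.prod_cons, map_mul, map_mul,
        Monoid.PushoutI.ofCoprodI_of, Monoid.PushoutI.ofCoprodI_of, hprod,
        pow_succ' (Monoid.PushoutI.of (φ := φ) true a * Monoid.PushoutI.of (φ := φ) false b) (n + 1),
        mul_assoc]

/-- Let `C`, `A`, `B` be groups with injective homomorphisms `φ₁ : C → A` and `φ₂ : C → B`
(here packaged as a family `φ` indexed by `Bool`, with `A = G true` and `B = G false`).
The amalgamated free product `A *_C B` (the pushout of the diagram `A ← C → B` in the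
category of groups) is a finite group if and only if `A` and `B` are both finite and at
least one of `φ₁`, `φ₂` is surjective. -/
theorem amalgam_finite_iff {C : Type*} [Group C] {G : Bool → Type*} [∀ i, Group (G i)]
    (φ : ∀ i, C →* G i) (hφ : ∀ i, Function.Injective (φ i)) :
    Finite (Monoid.PushoutI φ) ↔
      (∀ i, Finite (G i)) ∧ ∃ i, Function.Surjective (φ i) := by
  constructor
  · intro hfin
    refine ⟨fun i => Finite.of_injective _ (Monoid.PushoutI.of_injective hφ i), ?_⟩
    by_contra h
    push_neg at h
    obtain ⟨a, ha⟩ := not_forall.1 (fun hs => (h true) fun y => hs y)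
    obtain ⟨b, hb⟩ := not_forall.1 (fun hs => (h false) fun y => hs y)
    have ha' : a ∉ (φ true).range := by simpa using ha
    have hb' : b ∉ (φ false).range := by simpa using hb
    set x : Monoid.PushoutI φ :=
      Monoid.PushoutI.of (φ := φ) true a * Monoid.PushoutI.of (φ := φ) false b with hx
    have hpos : 0 < orderOf x := orderOf_pos x
    obtain ⟨w, hred, hfst, hne, hprod⟩ := amalgam_aux_word φ ha' hb' (orderOf x - 1)
    rw [Nat.sub_add_cancel hpos, ← hx, pow_orderOf_eq_one] at hprod
    have : w = .empty := hred.eq_empty_of_mem_range hφ (by rw [hprod]; exact one_mem _)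
    exact hne (by simp [this, Monoid.CoprodI.Word.empty])
  · rintro ⟨hfin, i, hsurj⟩
    have hsurj' : Function.Surjective (Monoid.PushoutI.of (φ := φ) !i) := by
      intro x
      induction x using Monoid.PushoutI.induction_on with
      | of j g =>
        rcases Bool.eq_or_eq_not j i with rfl | rfl
        · obtain ⟨c, rfl⟩ := hsurj g
          exact ⟨φ (!j) c, by rw [Monoid.PushoutI.of_apply_eq_base, Monoid.PushoutI.of_apply_eq_base]⟩
        · exact ⟨g, rfl⟩
      | base h => exact ⟨φ (!i) h, Monoid.PushoutI.of_apply_eq_base φ (!i) h⟩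
      | mul x y hx hy =>
        obtain ⟨g₁, rfl⟩ := hx
        obtain ⟨g₂, rfl⟩ := hy
        exact ⟨g₁ * g₂, map_mul _ _ _⟩
    exact Finite.of_surjective _ hsurj'
end

section
/- Let C, A, B be groups with injective homomorphisms φ₁ : C → A and φ₂ : C → B, let G = A *_C B be the amalgamated free product, and let ι_A : A → G and ι_B : B → G be the canonical homomorphisms. Then ι_A and ι_B are injective, and the intersection of the images ι_A(A) ∩ ι_B(B) equals ι_A(φ₁(C)), which also equals ι_B(φ₂(C)). -/
/-- Let `C`, `A`, `B` be groups with injective homomorphisms `φ₁ : C → A` and `φ₂ : C → B`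
(here packaged as a family `φ` indexed by `Bool`, with `A = G true` and `B = G false`), and
let `G = A *_C B` be the amalgamated free product (the pushout of `A ← C → B` in the category
of groups) with canonical homomorphisms `ι_A : A → G` and `ι_B : B → G`.  Then `ι_A` and
`ι_B` are injective, and the intersection of their images equals the image of `ι_A ∘ φ₁`,
which equals the image of `ι_B ∘ φ₂`. -/
theorem amalgam_embeddings_and_intersection {C : Type*} [Group C] {G : Bool → Type*}
    [∀ i, Group (G i)] (φ : ∀ i, C →* G i) (hφ : ∀ i, Function.Injective (φ i)) :
    (∀ i, Function.Injective (Monoid.PushoutI.of (φ := φ) i)) ∧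
    (Monoid.PushoutI.of (φ := φ) true).range ⊓ (Monoid.PushoutI.of (φ := φ) false).range =
      ((Monoid.PushoutI.of (φ := φ) true).comp (φ true)).range ∧
    ((Monoid.PushoutI.of (φ := φ) true).comp (φ true)).range =
      ((Monoid.PushoutI.of (φ := φ) false).comp (φ false)).range := by
  refine ⟨Monoid.PushoutI.of_injective hφ, ?_, ?_⟩
  · rw [Monoid.PushoutI.of_comp_eq_base]
    exact Monoid.PushoutI.inf_of_range_eq_base_range hφ (by simp)
  · rw [Monoid.PushoutI.of_comp_eq_base, Monoid.PushoutI.of_comp_eq_base]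
end
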